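/- Let u be the unique solution of the exterior problem. Then there exist r₀ > 0 with closure(Ω) ⊂ B(0, r₀) and positive constants C₁ < C₂ such that C₁ |x|^{2−n} ≤ u(x) ≤ C₂ |x|^{2−n} for every x with |x| ≥ r₀. -/

import Mathlib

open MeasureTheory Metric Set Filter
open scoped Topology ENNReal NNReal InnerProductSpace

noncomputable section

/-- Hessian of `u` at `x`, evaluated on the pair of vectors `(v, w)`. -/
def hess2 {n : ℕ} (u : EuclideanSpace ℝ (Fin n) → ℝ) (x v w : EuclideanSpace ℝ (Fin n)) : ℝ :=
  iteratedFDeriv ℝ 2 u x ![v, w]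

/-- Laplacian of `u` at `x`. -/
def lap {n : ℕ} (u : EuclideanSpace ℝ (Fin n) → ℝ) (x : EuclideanSpace ℝ (Fin n)) : ℝ :=
  ∑ i : Fin n, hess2 u x (EuclideanSpace.single i 1) (EuclideanSpace.single i 1)

/-- Mean curvature at `x` of the level set of `u` through `x`, with respect to the unit
normal `ν = -Du/|Du|`:  `H = D²u(ν,ν)/|Du|` (valid for harmonic `u`). -/
def meanH {n : ℕ} (u : EuclideanSpace ℝ (Fin n) → ℝ) (x : EuclideanSpace ℝ (Fin n)) : ℝ :=
  hess2 u x (gradient u x) (gradient u x) / ‖gradient u x‖ ^ 3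

/-- `(n-1)`-dimensional Hausdorff measure (area) of a subset of `ℝⁿ`. -/
def sArea {n : ℕ} (s : Set (EuclideanSpace ℝ (Fin n))) : ℝ :=
  (μH[(n : ℝ) - 1] s).toReal

/-- Area of the unit sphere `𝕊^{n-1} ⊆ ℝⁿ`. -/
def sphereArea (n : ℕ) : ℝ := sArea (Metric.sphere (0 : EuclideanSpace ℝ (Fin n)) 1)

/-- `Ω` is a bounded domain containing the origin. -/
def GoodDomain {n : ℕ} (Ω : Set (EuclideanSpace ℝ (Fin n))) : Prop :=
  IsOpen Ω ∧ IsConnected Ω ∧ Bornology.IsBounded Ω ∧ (0 : EuclideanSpace ℝ (Fin n)) ∈ Ω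

/-- The exterior problem: `u` is smooth up to the boundary on `ℝⁿ∖Ω`, harmonic in
`ℝⁿ∖closure(Ω)`, equal to `1` on `∂Ω`, and tends to `0` at infinity. -/
def ExteriorSol {n : ℕ} (Ω : Set (EuclideanSpace ℝ (Fin n)))
    (u : EuclideanSpace ℝ (Fin n) → ℝ) : Prop :=
  (∃ U, IsOpen U ∧ Ωᶜ ⊆ U ∧ ContDiffOn ℝ (⊤ : ℕ∞) u U) ∧
  (∀ x ∈ (closure Ω)ᶜ, lap u x = 0) ∧
  (∀ x ∈ frontier Ω, u x = 1) ∧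
  Tendsto u (cocompact (EuclideanSpace ℝ (Fin n))) (nhds 0)

/-- The interior problem with parameters `d > 0` and `c`: `u` is smooth up to the boundary away
from the origin, harmonic in `Ω∖{0}`, equal to `c` on `∂Ω`, and
`u - d|∂Ω||x|^{2-n}/((n-2)|𝕊^{n-1}|)` extends to a harmonic function on `Ω`. -/
def InteriorSol {n : ℕ} (Ω : Set (EuclideanSpace ℝ (Fin n))) (d c : ℝ)
    (u : EuclideanSpace ℝ (Fin n) → ℝ) : Prop :=
  (∃ U, IsOpen U ∧ closure Ω ⊆ U ∧ ContDiffOn ℝ (⊤ : ℕ∞) u (U \ {0})) ∧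
  (∀ x ∈ Ω \ {(0 : EuclideanSpace ℝ (Fin n))}, lap u x = 0) ∧
  (∀ x ∈ frontier Ω, u x = c) ∧
  (∃ v : EuclideanSpace ℝ (Fin n) → ℝ, ContDiffOn ℝ (⊤ : ℕ∞) v Ω ∧ (∀ x ∈ Ω, lap v x = 0) ∧
    ∀ x ∈ Ω \ {(0 : EuclideanSpace ℝ (Fin n))},
      u x = d * sArea (frontier Ω) / (((n : ℝ) - 2) * sphereArea n) * ‖x‖ ^ ((2 : ℝ) - n) + v x)

/-- The `P`-function `|Du|²/u^{2(n-1)/(n-2)} = |∇f|_g²`. -/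
def Pfun {n : ℕ} (u : EuclideanSpace ℝ (Fin n) → ℝ) (x : EuclideanSpace ℝ (Fin n)) : ℝ :=
  ‖gradient u x‖ ^ 2 / u x ^ (2 * ((n : ℝ) - 1) / ((n : ℝ) - 2))

/-- `|∇f|_g = |Du|/u^{(n-1)/(n-2)}`, the `g`-length of the gradient of `f = log u`. -/
def gradg {n : ℕ} (u : EuclideanSpace ℝ (Fin n) → ℝ) (x : EuclideanSpace ℝ (Fin n)) : ℝ :=
  ‖gradient u x‖ / u x ^ (((n : ℝ) - 1) / ((n : ℝ) - 2))

/-- The tensor `T = D²f - (1/(n-2))(2 df⊗df - |Df|² Id)` for `f = log u`, evaluated on `(v,w)`. -/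
def Tlog {n : ℕ} (u : EuclideanSpace ℝ (Fin n) → ℝ) (x v w : EuclideanSpace ℝ (Fin n)) : ℝ :=
  hess2 (fun y => Real.log (u y)) x v w -
    (1 / ((n : ℝ) - 2)) *
      (2 * ⟪gradient (fun y => Real.log (u y)) x, v⟫_ℝ *
          ⟪gradient (fun y => Real.log (u y)) x, w⟫_ℝ -
        ‖gradient (fun y => Real.log (u y)) x‖ ^ 2 * ⟪v, w⟫_ℝ)

/-- `|∇²f|_g² = u^{-4/(n-2)} |T|²`, the squared `g`-norm of the `g`-Hessian of `f = log u`. -/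
def hessgSq {n : ℕ} (u : EuclideanSpace ℝ (Fin n) → ℝ) (x : EuclideanSpace ℝ (Fin n)) : ℝ :=
  u x ^ (-(4 : ℝ) / ((n : ℝ) - 2)) *
    ∑ i : Fin n, ∑ j : Fin n,
      (Tlog u x (EuclideanSpace.single i 1) (EuclideanSpace.single j 1)) ^ 2

/-- The `g`-mean curvature of a regular level set of `u`:
`H_g/(n-1) = u^{-1/(n-2)} ( H/(n-1) - |Du|/((n-2)u) )`. -/
def Hg {n : ℕ} (u : EuclideanSpace ℝ (Fin n) → ℝ) (x : EuclideanSpace ℝ (Fin n)) : ℝ :=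
  ((n : ℝ) - 1) * u x ^ (-(1 : ℝ) / ((n : ℝ) - 2)) *
    (meanH u x / ((n : ℝ) - 1) - ‖gradient u x‖ / (((n : ℝ) - 2) * u x))

/-- The pointwise Hessian identity `u·D²u = (n/(n-2)) Du⊗Du - (|Du|²/(n-2)) Id`, equivalent to
the vanishing of the `g`-Hessian of `f = log u`. -/
def HessId {n : ℕ} (u : EuclideanSpace ℝ (Fin n) → ℝ) (x : EuclideanSpace ℝ (Fin n)) : Prop :=
  ∀ v w : EuclideanSpace ℝ (Fin n),
    u x * hess2 u x v w =
      ((n : ℝ) / ((n : ℝ) - 2)) * (⟪gradient u x, v⟫_ℝ * ⟪gradient u x, w⟫_ℝ) -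
        (‖gradient u x‖ ^ 2 / ((n : ℝ) - 2)) * ⟪v, w⟫_ℝ

section AuxExtAsymp
variable {n : ℕ}
local notation "E" => EuclideanSpace ℝ (Fin n)

lemma lap_eq (u : E → ℝ) (x : E) :
    lap u x = ∑ i : Fin n, fderiv ℝ (fderiv ℝ u) x (EuclideanSpace.single i 1)
      (EuclideanSpace.single i 1) := by
  unfold lap hess2
  refine Finset.sum_congr rfl fun i _ => ?_
  rw [iteratedFDeriv_two_apply]
  simp

lemma hess_apply {f : E → ℝ} {s : Set E} (hs : IsOpen s) {x : E} (hx : x ∈ s)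
    (F : E → E →L[ℝ] ℝ) (hF : ∀ y ∈ s, HasFDerivAt f (F y) y)
    (hdiff : DifferentiableAt ℝ (fderiv ℝ f) x)
    {w : E} {G : E →L[ℝ] ℝ} (hG : HasFDerivAt (fun y => F y w) G x)
    (v : E) : fderiv ℝ (fderiv ℝ f) x v w = G v := by
  have h1 : fderiv ℝ (fun y => fderiv ℝ f y w) x = (fderiv ℝ (fderiv ℝ f) x).flip w := by
    rw [fderiv_clm_apply hdiff (differentiableAt_const w)]
    simp
  have h2 : (fun y => fderiv ℝ f y w) =ᶠ[𝓝 x] (fun y => F y w) := by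
    filter_upwards [hs.mem_nhds hx] with y hy
    rw [(hF y hy).fderiv]
  have h3 : fderiv ℝ (fun y => fderiv ℝ f y w) x = G := by
    rw [h2.fderiv_eq, hG.fderiv]
  have h4 := h1.symm.trans h3
  calc fderiv ℝ (fderiv ℝ f) x v w = (fderiv ℝ (fderiv ℝ f) x).flip w v := rfl
    _ = G v := by rw [h4]

lemma diff_fderiv {f : E → ℝ} {x : E} (hf : ContDiffAt ℝ 2 f x) :
    DifferentiableAt ℝ (fderiv ℝ f) x :=
  (hf.fderiv_right (m := 1) (by norm_num)).differentiableAt one_ne_zero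

lemma hasFDerivAt_inner_right (w x : E) :
    HasFDerivAt (fun y : E => ⟪y, w⟫_ℝ) (innerSL ℝ w) x := by
  have h : (fun y : E => ⟪y, w⟫_ℝ) = fun y => (innerSL ℝ w) y := by
    ext y; exact real_inner_comm _ _
  rw [h]; exact (innerSL ℝ w).hasFDerivAt

lemma hasFDerivAt_mul'' {c d : E → ℝ} {c' d' : E →L[ℝ] ℝ} {x : E} (hc : HasFDerivAt c c' x)
    (hd : HasFDerivAt d d' x) : HasFDerivAt (fun y => c y * d y) (c x • d' + d x • c') x :=
  hc.mul' hd |>.congr_fderiv (by ext v; simp)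

def qf : E → ℝ := fun y => ‖y‖ ^ 2
def bfun (n : ℕ) : E → ℝ := fun y => qf y ^ (((2:ℝ) - n)/2)

lemma qf_pos {x : E} (hx : x ≠ 0) : 0 < qf x := by
  have : 0 < ‖x‖ := norm_pos_iff.2 hx
  unfold qf; positivity

lemma qf_hasFDerivAt (y : E) : HasFDerivAt (qf (n := n)) (2 • (innerSL ℝ y)) y :=
  (hasStrictFDerivAt_norm_sq y).hasFDerivAt

lemma qf_contDiff : ContDiff ℝ (⊤ : WithTop ℕ∞) (qf (n := n)) := contDiff_norm_sq (𝕜 := ℝ)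

lemma sum_single_sq (x : E) : ∑ i, ⟪x, EuclideanSpace.single i (1:ℝ)⟫_ℝ^2 = qf x := by
  have h : ∀ i, ⟪x, EuclideanSpace.single i (1:ℝ)⟫_ℝ = x i := by
    intro i; simp [EuclideanSpace.inner_single_right]
  simp only [h]
  rw [show qf x = ‖x‖^2 from rfl, EuclideanSpace.norm_eq, Real.sq_sqrt (by positivity)]
  simp [sq_abs]

lemma inner_single_self (i : Fin n) :
    ⟪(EuclideanSpace.single i (1:ℝ) : E), EuclideanSpace.single i (1:ℝ)⟫_ℝ = 1 := by
  rw [real_inner_self_eq_norm_sq, EuclideanSpace.norm_single]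
  norm_num

lemma lap_qf (x : E) : lap (qf (n := n)) x = 2 * n := by
  rw [lap_eq]
  have hG : ∀ w : E, HasFDerivAt (fun y : E => (2 • (innerSL ℝ y)) w)
      ((2 • (innerSL ℝ w) : E →L[ℝ] ℝ)) x := by
    intro w
    have h : (fun y : E => (2 • (innerSL ℝ y)) w) = fun y : E => 2 • (innerSL ℝ w) y := by
      ext y
      simp only [ContinuousLinearMap.smul_apply, innerSL_apply_apply]
      rw [real_inner_comm]
    rw [h]
    exact ((2 • (innerSL ℝ w) : E →L[ℝ] ℝ)).hasFDerivAt
  have key : ∀ i : Fin n, fderiv ℝ (fderiv ℝ (qf (n := n))) x (EuclideanSpace.single i 1)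
      (EuclideanSpace.single i 1) = 2 := by
    intro i
    rw [hess_apply isOpen_univ (mem_univ x) _ (fun y _ => qf_hasFDerivAt y)
      (diff_fderiv (qf_contDiff.contDiffAt.of_le (by simp))) (hG _)]
    simp [real_inner_self_eq_norm_sq, EuclideanSpace.norm_single]
  simp [key, Finset.sum_const, Finset.card_univ]
  ring

lemma bfun_contDiffAt {x : E} (hx : x ≠ 0) :
    ContDiffAt ℝ (⊤ : WithTop ℕ∞) (bfun n (n := n)) x :=
  (Real.contDiffAt_rpow_const_of_ne (qf_pos hx).ne').comp x
    (contDiff_norm_sq (𝕜 := ℝ)).contDiffAt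

lemma bfun_hasFDerivAt {y : E} (hy : y ≠ 0) :
    HasFDerivAt (bfun n (n := n))
      ((((2:ℝ) - n)/2 * qf y ^ (((2:ℝ) - n)/2 - 1)) • (2 • (innerSL ℝ y))) y := by
  have h1 : HasDerivAt (fun t : ℝ => t ^ (((2:ℝ) - n)/2))
      (((2:ℝ) - n)/2 * qf y ^ (((2:ℝ) - n)/2 - 1)) (qf y) :=
    (Real.hasStrictDerivAt_rpow_const_of_ne (qf_pos hy).ne' _).hasDerivAt
  exact h1.comp_hasFDerivAt y (qf_hasFDerivAt y)

lemma lap_bfun {x : E} (hx : x ≠ 0) : lap (bfun n (n := n)) x = 0 := by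
  set β : ℝ := ((2:ℝ) - n)/2 with hβ
  have hq : 0 < qf x := qf_pos hx
  rw [lap_eq]
  set F : E → E →L[ℝ] ℝ := fun y => ((β * qf y ^ (β - 1)) • (2 • (innerSL ℝ y))) with hF
  have ha : HasFDerivAt (fun y : E => β * qf y ^ (β - 1))
      (β • (((β - 1) * qf x ^ (β - 2)) • (2 • (innerSL ℝ x)))) x := by
    have h1 : HasDerivAt (fun t : ℝ => t ^ (β - 1)) ((β - 1) * qf x ^ (β - 1 - 1)) (qf x) :=
      (Real.hasStrictDerivAt_rpow_const_of_ne hq.ne' _).hasDerivAt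
    have h2 := h1.comp_hasFDerivAt x (qf_hasFDerivAt x)
    have h3 : β - 1 - 1 = β - 2 := by ring
    rw [h3] at h2
    exact h2.const_smul β
  have key : ∀ i : Fin n, fderiv ℝ (fderiv ℝ (bfun n (n := n))) x (EuclideanSpace.single i 1)
      (EuclideanSpace.single i 1)
      = (β * qf x ^ (β - 1)) * (2 * ⟪(EuclideanSpace.single i (1:ℝ) : E),
          EuclideanSpace.single i (1:ℝ)⟫_ℝ)
        + (2 * ⟪x, (EuclideanSpace.single i (1:ℝ) : E)⟫_ℝ) *
          (β * ((β - 1) * qf x ^ (β - 2) * (2 * ⟪x, (EuclideanSpace.single i (1:ℝ) : E)⟫_ℝ))) := by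
    intro i
    set w : E := EuclideanSpace.single i (1:ℝ) with hw
    have hb : HasFDerivAt (fun y : E => 2 * ⟪y, w⟫_ℝ) (((2:ℝ) • (innerSL ℝ w)) : E →L[ℝ] ℝ) x := by
      have := (hasFDerivAt_inner_right w x).const_smul (2:ℝ)
      exact this
    have hfun : (fun y : E => F y w) = fun y : E => (β * qf y ^ (β - 1)) * (2 * ⟪y, w⟫_ℝ) := by
      ext y
      simp [hF, smul_eq_mul]
      try ring
    have hG : HasFDerivAt (fun y : E => F y w)
        ((β * qf x ^ (β - 1)) • (((2:ℝ) • (innerSL ℝ w)) : E →L[ℝ] ℝ)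
          + (2 * ⟪x, w⟫_ℝ) • (β • (((β - 1) * qf x ^ (β - 2)) • (2 • (innerSL ℝ x))))) x := by
      rw [hfun]
      exact hasFDerivAt_mul'' ha hb
    rw [hess_apply (s := {y : E | y ≠ 0}) (isOpen_ne) hx F
      (fun y hy => bfun_hasFDerivAt hy)
      (diff_fderiv ((bfun_contDiffAt hx).of_le (by simp))) hG]
    simp [smul_eq_mul]
    try ring
  rw [Finset.sum_congr rfl (fun i _ => key i)]
  rw [Finset.sum_add_distrib]
  have h1 : ∑ i : Fin n, (β * qf x ^ (β - 1)) * (2 * ⟪(EuclideanSpace.single i (1:ℝ) : E),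
      EuclideanSpace.single i (1:ℝ)⟫_ℝ) = (β * qf x ^ (β - 1)) * (2 * n) := by
    simp [inner_single_self]
    try ring
  have h2 : ∑ i : Fin n, (2 * ⟪x, (EuclideanSpace.single i (1:ℝ) : E)⟫_ℝ) *
      (β * ((β - 1) * qf x ^ (β - 2) * (2 * ⟪x, (EuclideanSpace.single i (1:ℝ) : E)⟫_ℝ)))
      = 4 * β * (β - 1) * qf x ^ (β - 2) *
        (∑ i : Fin n, ⟪x, (EuclideanSpace.single i (1:ℝ) : E)⟫_ℝ^2) := by
    rw [Finset.mul_sum]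
    exact Finset.sum_congr rfl fun i _ => by ring
  rw [sum_single_sq] at h2
  rw [h1, h2]
  have h3 : qf x ^ (β - 2) * qf x = qf x ^ (β - 1) := by
    rw [show β - 1 = β - 2 + 1 by ring, Real.rpow_add_one hq.ne']
  have h4 : 4 * β * (β - 1) * qf x ^ (β - 2) * qf x = 4 * β * (β - 1) * (qf x ^ (β - 2) * qf x) := by
    ring
  rw [h4, h3]
  have h5 : β * qf x ^ (β - 1) * (2 * ↑n) + 4 * β * (β - 1) * qf x ^ (β - 1)
      = (2 * β * (↑n + 2 * β - 2)) * qf x ^ (β - 1) := by ring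
  rw [h5, hβ]
  have h6 : 2 * (((2:ℝ) - ↑n)/2) * (↑n + 2 * (((2:ℝ) - ↑n)/2) - 2) = 0 := by ring
  rw [h6, zero_mul]

-- 1D second derivative at a local max
lemma oneD {φ ψ : ℝ → ℝ} {c : ℝ} {sI : Set ℝ} (hsI : IsOpen sI) (h0 : (0:ℝ) ∈ sI)
    (hφ : ∀ t ∈ sI, HasDerivAt φ (ψ t) t) (hψ : HasDerivAt ψ c 0) (hψ0 : ψ 0 = 0)
    (hmax : IsLocalMax φ 0) : c ≤ 0 := by
  by_contra hpos
  push_neg at hpos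
  have hslope : Tendsto (slope ψ 0) (𝓝[≠] 0) (𝓝 c) := hasDerivAt_iff_tendsto_slope.1 hψ
  have h1 : ∀ᶠ t in 𝓝[≠] (0:ℝ), c/2 < slope ψ 0 t :=
    hslope.eventually (eventually_gt_nhds (by linarith))
  rw [eventually_nhdsWithin_iff] at h1
  obtain ⟨δ1, hδ1, H1⟩ := Metric.eventually_nhds_iff.1 h1
  obtain ⟨δ2, hδ2, H2⟩ := Metric.eventually_nhds_iff.1 (hsI.eventually_mem h0)
  obtain ⟨δ3, hδ3, H3⟩ := Metric.eventually_nhds_iff.1 hmax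
  set t₀ : ℝ := min δ1 (min δ2 δ3) / 2 with ht₀
  have ht₀pos : 0 < t₀ := by positivity
  have ht1 : t₀ < δ1 := by
    have := min_le_left δ1 (min δ2 δ3); rw [ht₀]; linarith
  have ht2 : t₀ < δ2 := by
    have := le_trans (min_le_right δ1 (min δ2 δ3)) (min_le_left δ2 δ3); rw [ht₀]; linarith
  have ht3 : t₀ < δ3 := by
    have := le_trans (min_le_right δ1 (min δ2 δ3)) (min_le_right δ2 δ3); rw [ht₀]; linarith
  have hsub : ∀ t : ℝ, 0 ≤ t → t ≤ t₀ → t ∈ sI := by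
    intro t h1' h2'
    apply H2
    rw [Real.dist_eq, sub_zero, abs_of_nonneg h1']
    linarith
  have hcont : ContinuousOn φ (Set.Icc 0 t₀) := by
    intro t ht
    exact (hφ t (hsub t ht.1 ht.2)).continuousAt.continuousWithinAt
  have hderiv : ∀ t ∈ Set.Ioo (0:ℝ) t₀, HasDerivAt φ (ψ t) t :=
    fun t ht => hφ t (hsub t ht.1.le ht.2.le)
  obtain ⟨ξ, hξ, hξ2⟩ := exists_hasDerivAt_eq_slope φ ψ ht₀pos hcont hderiv
  -- ψ ξ > 0
  have hξpos : 0 < ψ ξ := by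
    have hd : dist ξ 0 < δ1 := by
      rw [Real.dist_eq, sub_zero, abs_of_pos hξ.1]
      linarith [hξ.2]
    have hs := H1 hd (by exact ne_of_gt hξ.1)
    rw [slope_def_field, hψ0] at hs
    have h' : 0 < (ψ ξ - 0) / (ξ - 0) := lt_trans (by linarith) hs
    rw [sub_zero, sub_zero] at h'
    have := mul_pos h' hξ.1
    rwa [div_mul_cancel₀ _ (ne_of_gt hξ.1)] at this
  -- but slope of φ over [0,t₀] is ≤ 0
  have hφle : φ t₀ ≤ φ 0 := by
    apply H3
    rw [Real.dist_eq, sub_zero, abs_of_pos ht₀pos]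
    linarith
  rw [hξ2] at hξpos
  have : (φ t₀ - φ 0) / (t₀ - 0) ≤ 0 := by
    apply div_nonpos_of_nonpos_of_nonneg <;> [linarith; linarith]
  linarith

lemma lap_nonpos_at_localMax {f : E → ℝ} {s : Set E} (hs : IsOpen s) {x : E} (hx : x ∈ s)
    (hf : ContDiffOn ℝ 2 f s) (hmax : IsLocalMax f x) : lap f x ≤ 0 := by
  rw [lap_eq]
  apply Finset.sum_nonpos
  intro i _
  set e : E := EuclideanSpace.single i (1:ℝ) with he
  have hfd : ∀ y ∈ s, HasFDerivAt f (fderiv ℝ f y) y := fun y hy =>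
    (((hf.contDiffAt (hs.mem_nhds hy)).differentiableAt two_ne_zero).hasFDerivAt)
  have hdiff : DifferentiableAt ℝ (fderiv ℝ f) x := diff_fderiv (hf.contDiffAt (hs.mem_nhds hx))
  set L : ℝ → E := fun t => x + t • e with hL
  have hLd : ∀ t : ℝ, HasDerivAt L e t := by
    intro t
    have h1 : HasDerivAt (fun t : ℝ => t • e) ((1:ℝ) • e) t := (hasDerivAt_id t).smul_const e
    rw [one_smul] at h1
    exact h1.const_add x
  have hL0 : L 0 = x := by simp [hL]
  have hLcont : Continuous L := by
    apply continuous_const.add (continuous_id.smul continuous_const)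
  set sI : Set ℝ := L ⁻¹' s with hsI
  have hsIopen : IsOpen sI := hs.preimage hLcont
  have h0 : (0:ℝ) ∈ sI := by simp [hsI, hL0, hx]
  set φ : ℝ → ℝ := fun t => f (L t) with hφdef
  set ψ : ℝ → ℝ := fun t => fderiv ℝ f (L t) e with hψdef
  have hφ : ∀ t ∈ sI, HasDerivAt φ (ψ t) t := fun t ht =>
    (hfd _ ht).comp_hasDerivAt t (hLd t)
  -- derivative of ψ at 0
  have hB : HasFDerivAt (fun y => fderiv ℝ f y e)
      ((fderiv ℝ f x).comp (0 : E →L[ℝ] E) + (fderiv ℝ (fderiv ℝ f) x).flip e) x :=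
    hdiff.hasFDerivAt.clm_apply (hasFDerivAt_const e x)
  have hψ : HasDerivAt ψ (fderiv ℝ (fderiv ℝ f) x e e) 0 := by
    rw [← hL0] at hB
    have := hB.comp_hasDerivAt 0 (hLd 0)
    rw [hL0] at this
    simp at this
    exact this
  have hψ0 : ψ 0 = 0 := by
    have hmaxφ : IsLocalMax φ 0 := by
      have : ∀ᶠ t in 𝓝 (0:ℝ), f (L t) ≤ f x := (hLcont.tendsto 0).eventually (by rw [hL0]; exact hmax)
      filter_upwards [this] with t ht
      simpa [hφdef, hL0] using ht
    exact hmaxφ.hasDerivAt_eq_zero (hφ 0 h0)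
  have hmaxφ : IsLocalMax φ 0 := by
    have : ∀ᶠ t in 𝓝 (0:ℝ), f (L t) ≤ f x := (hLcont.tendsto 0).eventually (by rw [hL0]; exact hmax)
    filter_upwards [this] with t ht
    simpa [hφdef, hL0] using ht
  exact oneD hsIopen h0 hφ hψ hψ0 hmaxφ

lemma lap_add {f g : E → ℝ} {x : E} (hf : ContDiffAt ℝ 2 f x) (hg : ContDiffAt ℝ 2 g x) :
    lap (fun y => f y + g y) x = lap f x + lap g x := by
  have hf' : ∀ᶠ y in 𝓝 x, DifferentiableAt ℝ f y := by
    filter_upwards [hf.eventually (by norm_num)] with y hy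
    exact hy.differentiableAt two_ne_zero
  have hg' : ∀ᶠ y in 𝓝 x, DifferentiableAt ℝ g y := by
    filter_upwards [hg.eventually (by norm_num)] with y hy
    exact hy.differentiableAt two_ne_zero
  have h1 : fderiv ℝ (fun y => f y + g y) =ᶠ[𝓝 x] fun y => fderiv ℝ f y + fderiv ℝ g y := by
    filter_upwards [hf', hg'] with y hfy hgy
    exact fderiv_add hfy hgy
  have h2 : fderiv ℝ (fderiv ℝ (fun y => f y + g y)) x
      = fderiv ℝ (fderiv ℝ f) x + fderiv ℝ (fderiv ℝ g) x := by
    rw [h1.fderiv_eq, fderiv_fun_add (diff_fderiv hf) (diff_fderiv hg)]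
  rw [lap_eq, lap_eq, lap_eq, ← Finset.sum_add_distrib]
  refine Finset.sum_congr rfl fun i _ => ?_
  rw [h2]
  simp

lemma lap_const_mul {f : E → ℝ} {x : E} (a : ℝ) (hf : ContDiffAt ℝ 2 f x) :
    lap (fun y => a * f y) x = a * lap f x := by
  have hf' : ∀ᶠ y in 𝓝 x, DifferentiableAt ℝ f y := by
    filter_upwards [hf.eventually (by norm_num)] with y hy
    exact hy.differentiableAt two_ne_zero
  have h1 : fderiv ℝ (fun y => a * f y) =ᶠ[𝓝 x] fun y => a • fderiv ℝ f y := by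
    filter_upwards [hf'] with y hfy
    exact fderiv_const_mul hfy a
  have h2 : fderiv ℝ (fderiv ℝ (fun y => a * f y)) x = a • fderiv ℝ (fderiv ℝ f) x := by
    rw [h1.fderiv_eq, fderiv_fun_const_smul (diff_fderiv hf) a]
  rw [lap_eq, lap_eq, h2, Finset.mul_sum]
  refine Finset.sum_congr rfl fun i _ => ?_
  simp

lemma lap_const (x : E) (c : ℝ) : lap (fun _ : E => c) x = 0 := by
  rw [lap_eq]
  have h1 : fderiv ℝ (fun _ : E => c) = fun _ : E => (0 : E →L[ℝ] ℝ) := by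
    funext y; exact fderiv_const_apply c
  rw [h1]
  simp [fderiv_const_apply]

lemma lap_add_const {f : E → ℝ} {x : E} (k : ℝ) (hf : ContDiffAt ℝ 2 f x) :
    lap (fun y => f y + k) x = lap f x := by
  rw [lap_add hf contDiffAt_const, lap_const, add_zero]

lemma weak_max (hn : 0 < n) {D s : Set E} (hD : IsOpen D) (hbd : Bornology.IsBounded D)
    (hs : IsOpen s) (hsub : closure D ⊆ s) {f : E → ℝ} (hf : ContDiffOn ℝ 2 f s)
    (hlap : ∀ y ∈ D, lap f y = 0) {M : ℝ} (hM : ∀ y ∈ frontier D, f y ≤ M) :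
    ∀ x ∈ closure D, f x ≤ M := by
  intro x hxcl
  have hcomp : IsCompact (closure D) := hbd.isCompact_closure
  have hqcont : Continuous (qf (n := n)) := (qf_contDiff (n := n)).continuous
  have hcont : ContinuousOn f (closure D) := (hf.continuousOn).mono hsub
  obtain ⟨y₀, hy₀, hy₀max⟩ := hcomp.exists_isMaxOn ⟨x, hxcl⟩ hqcont.continuousOn
  set B : ℝ := qf y₀ with hB
  have hBnonneg : 0 ≤ B := by
    have : (0:ℝ) ≤ qf y₀ := by unfold qf; positivity
    linarith
  have hqnonneg : ∀ y : E, 0 ≤ qf y := by intro y; unfold qf; positivity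
  have key : ∀ ε : ℝ, 0 < ε → f x ≤ M + ε * B := by
    intro ε hε
    set g : E → ℝ := fun y => f y + ε * qf y with hg
    have hgcd : ContDiffOn ℝ 2 g s :=
      hf.add ((contDiff_const.mul (qf_contDiff.of_le (by simp))).contDiffOn)
    have hgcont : ContinuousOn g (closure D) :=
      hcont.add ((continuous_const.mul hqcont).continuousOn)
    obtain ⟨x₀, hx₀cl, hx₀max⟩ := hcomp.exists_isMaxOn ⟨x, hxcl⟩ hgcont
    have hnotD : x₀ ∉ D := by
      intro hx₀D'
      have hloc : IsLocalMax g x₀ := by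
        filter_upwards [hD.eventually_mem hx₀D'] with y hy
        exact hx₀max (subset_closure hy)
      have h1 : lap g x₀ ≤ 0 :=
        lap_nonpos_at_localMax hs (hsub (subset_closure hx₀D')) hgcd hloc
      have h2 : lap g x₀ = ε * (2 * n) := by
        rw [hg, lap_add (hf.contDiffAt (hs.mem_nhds (hsub (subset_closure hx₀D'))))
          ((contDiff_const.mul (qf_contDiff.of_le (by simp))).contDiffAt),
          lap_const_mul ε ((qf_contDiff.of_le (by simp)).contDiffAt), lap_qf, hlap x₀ hx₀D']
        ring
      have h3 : (0:ℝ) < ε * (2 * n) := by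
        have : (0:ℝ) < n := by exact_mod_cast hn
        positivity
      linarith
    have hx₀front : x₀ ∈ frontier D := by
      rw [hD.frontier_eq]
      exact ⟨hx₀cl, hnotD⟩
    have c1 : f x ≤ g x := by
      show f x ≤ f x + ε * qf x
      nlinarith [hqnonneg x]
    have c2 : g x ≤ g x₀ := hx₀max hxcl
    have c3 : g x₀ ≤ M + ε * B := by
      have h4 : f x₀ ≤ M := hM x₀ hx₀front
      have h5 : qf x₀ ≤ B := hy₀max hx₀cl
      show f x₀ + ε * qf x₀ ≤ M + ε * B
      nlinarith
    linarith
  refine le_of_forall_pos_le_add fun ε hε => ?_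
  have hb1 : (0:ℝ) < B + 1 := by linarith
  have h6 := key (ε / (B + 1)) (by positivity)
  have h7 : ε / (B + 1) * B ≤ ε := by
    rw [div_mul_eq_mul_div, div_le_iff₀ hb1]
    nlinarith
  linarith

lemma bfun_eq (y : E) : bfun n y = ‖y‖ ^ ((2:ℝ) - n) := by
  unfold bfun qf
  rw [← Real.rpow_natCast ‖y‖ 2, ← Real.rpow_mul (norm_nonneg y),
    show ((2:ℕ):ℝ) * (((2:ℝ) - n)/2) = (2:ℝ) - n by push_cast; ring]

end AuxExtAsymp

/-- two-sided asymptotic bounds for the exterior potential. -/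
theorem exterior_asymptotic_bounds
    (n : ℕ) (hn : 3 ≤ n) (Ω : Set (EuclideanSpace ℝ (Fin n)))
    (u : EuclideanSpace ℝ (Fin n) → ℝ)
    (hΩ : GoodDomain Ω) (hu : ExteriorSol Ω u) :
    ∃ r₀ : ℝ, 0 < r₀ ∧ closure Ω ⊆ Metric.ball (0 : EuclideanSpace ℝ (Fin n)) r₀ ∧
      ∃ C₁ C₂ : ℝ, 0 < C₁ ∧ C₁ < C₂ ∧
        ∀ x : EuclideanSpace ℝ (Fin n), r₀ ≤ ‖x‖ →
          C₁ * ‖x‖ ^ ((2 : ℝ) - n) ≤ u x ∧ u x ≤ C₂ * ‖x‖ ^ ((2 : ℝ) - n) := by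
  obtain ⟨hopen, hconn, hbdd, h0Ω⟩ := hΩ
  obtain ⟨⟨U, hUopen, hUsub, huU⟩, hharm, hbdry, htend⟩ := hu
  have hnpos : 0 < n := by omega
  have hn3 : (3:ℝ) ≤ (n:ℝ) := by exact_mod_cast hn
  obtain ⟨δ, hδpos, hδball⟩ := Metric.isOpen_iff.1 hopen 0 h0Ω
  obtain ⟨r₀, hr₀gt, hr₀sub⟩ := (hbdd.closure).subset_ball_lt (δ + 1) 0
  have hδr : δ < r₀ := by linarith
  have hr₀pos : 0 < r₀ := by linarith
  set C₁ : ℝ := δ ^ ((n:ℝ) - 2) with hC₁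
  set C₂ : ℝ := r₀ ^ ((n:ℝ) - 2) with hC₂
  have hC₁pos : 0 < C₁ := Real.rpow_pos_of_pos hδpos _
  have hC₂pos : 0 < C₂ := Real.rpow_pos_of_pos hr₀pos _
  refine ⟨r₀, hr₀pos, hr₀sub, C₁, C₂, hC₁pos,
    Real.rpow_lt_rpow hδpos.le hδr (by linarith), ?_⟩
  intro x hx
  have hδΩc : ∀ y : EuclideanSpace ℝ (Fin n), y ∉ Ω → δ ≤ ‖y‖ := by
    intro y hy
    by_contra h
    push_neg at h
    exact hy (hδball (by rwa [Metric.mem_ball, dist_zero_right]))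
  have hxnotin : x ∉ closure Ω := by
    intro hmem
    have := hr₀sub hmem
    rw [mem_ball_zero_iff] at this
    linarith
  have hxpos : (0:ℝ) < ‖x‖ := by linarith
  have hexp_nonpos : ((2:ℝ) - (n:ℝ)) ≤ 0 := by linarith
  have main : ∀ ε : ℝ, 0 < ε →
      C₁ * ‖x‖ ^ ((2:ℝ) - n) ≤ u x + 2*ε ∧ u x ≤ C₂ * ‖x‖ ^ ((2:ℝ) - n) + ε := by
    intro ε hε
    have hcc : u ⁻¹' Metric.ball (0:ℝ) ε ∈ cocompact (EuclideanSpace ℝ (Fin n)) :=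
      htend (Metric.ball_mem_nhds 0 hε)
    rw [Filter.mem_cocompact] at hcc
    obtain ⟨K', hK'c, hK's⟩ := hcc
    obtain ⟨RK, hRK0, hRKs⟩ := hK'c.isBounded.subset_ball_lt 0 0
    set R : ℝ := 1 + max (max ‖x‖ RK) (max r₀ (C₁/ε)) with hR
    have hm0 : (0:ℝ) ≤ max (max ‖x‖ RK) (max r₀ (C₁/ε)) :=
      le_trans hxpos.le (le_trans (le_max_left ‖x‖ RK) (le_max_left (max ‖x‖ RK) (max r₀ (C₁/ε))))
    have hR1 : (1:ℝ) ≤ R := by rw [hR]; linarith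
    have hRpos : (0:ℝ) < R := by linarith
    have hRx : ‖x‖ < R := by
      have := le_trans (le_max_left ‖x‖ RK) (le_max_left (max ‖x‖ RK) (max r₀ (C₁/ε)))
      rw [hR]; linarith
    have hRK : RK < R := by
      have := le_trans (le_max_right ‖x‖ RK) (le_max_left (max ‖x‖ RK) (max r₀ (C₁/ε)))
      rw [hR]; linarith
    have hRr₀ : r₀ < R := by
      have := le_trans (le_max_left r₀ (C₁/ε)) (le_max_right (max ‖x‖ RK) _)
      rw [hR]; linarith
    have hRC : C₁ * R ^ ((2:ℝ) - n) ≤ ε := by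
      have h1 : R ^ ((2:ℝ) - n) ≤ R ^ (-1:ℝ) :=
        Real.rpow_le_rpow_of_exponent_le hR1 (by linarith)
      rw [Real.rpow_neg_one] at h1
      have h2 : C₁/ε < R := by
        have := le_trans (le_max_right r₀ (C₁/ε)) (le_max_right (max ‖x‖ RK) _)
        rw [hR]; linarith
      have h3 : C₁ < R * ε := by rwa [div_lt_iff₀ hε] at h2
      calc C₁ * R ^ ((2:ℝ) - n) ≤ C₁ * R⁻¹ := by
            exact mul_le_mul_of_nonneg_left h1 hC₁pos.le
        _ = C₁ / R := by rw [div_eq_mul_inv]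
        _ ≤ ε := by rw [div_le_iff₀ hRpos]; nlinarith
    set D : Set (EuclideanSpace ℝ (Fin n)) := Metric.ball 0 R \ closure Ω with hDdef
    have hDopen : IsOpen D := isOpen_ball.sdiff isClosed_closure
    have hDbd : Bornology.IsBounded D := (isBounded_ball).subset diff_subset
    have hDsubΩc : closure D ⊆ Ωᶜ := by
      have h1 : D ⊆ (closure Ω)ᶜ := fun y hy => hy.2
      have h2 := closure_mono h1
      rw [closure_compl] at h2
      intro y hy hyΩ
      exact (h2 hy) (interior_maximal subset_closure hopen hyΩ)
    have hDne0 : ∀ y ∈ closure D, y ≠ (0 : EuclideanSpace ℝ (Fin n)) := by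
      intro y hy h0
      have := hδΩc y (hDsubΩc hy)
      rw [h0, norm_zero] at this
      linarith
    have hDU : closure D ⊆ U := fun y hy => hUsub (hDsubΩc hy)
    set s₀ : Set (EuclideanSpace ℝ (Fin n)) := U ∩ {y | y ≠ 0} with hs₀def
    have hs₀open : IsOpen s₀ := hUopen.inter isOpen_compl_singleton
    have hDs₀ : closure D ⊆ s₀ := fun y hy => ⟨hDU hy, hDne0 y hy⟩
    have hucd : ContDiffOn ℝ 2 u s₀ := (huU.mono inter_subset_left).of_le (WithTop.coe_le_coe.2 le_top)
    have hbcd : ContDiffOn ℝ 2 (bfun n) s₀ := fun y hy =>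
      ((bfun_contDiffAt hy.2).of_le (by simp)).contDiffWithinAt
    have hfr : frontier D ⊆ Metric.sphere (0 : EuclideanSpace ℝ (Fin n)) R ∪ frontier Ω := by
      have h0 : D = Metric.ball (0 : EuclideanSpace ℝ (Fin n)) R ∩ (closure Ω)ᶜ := by
        rw [hDdef, diff_eq]
      rw [h0]
      refine (frontier_inter_subset _ _).trans ?_
      intro y hy
      rcases hy with ⟨h1, _⟩ | ⟨_, h2⟩
      · left
        rw [← frontier_ball (0 : EuclideanSpace ℝ (Fin n)) (ne_of_gt hRpos)]
        exact h1
      · right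
        rw [frontier_compl] at h2
        have hz1 : y ∈ closure (closure Ω) := h2.1
        rw [closure_closure] at hz1
        exact ⟨hz1, fun hzint => h2.2 (interior_mono subset_closure hzint)⟩
    have hsphere_u : ∀ y : EuclideanSpace ℝ (Fin n), ‖y‖ = R → |u y| < ε := by
      intro y hyR
      have hynK : y ∉ K' := by
        intro hK
        have := hRKs hK
        rw [mem_ball_zero_iff] at this
        rw [hyR] at this
        linarith
      have := hK's hynK
      rwa [Set.mem_preimage, Metric.mem_ball, Real.dist_eq, sub_zero] at this
    have hfrontΩ : ∀ y ∈ frontier Ω, δ ≤ ‖y‖ ∧ ‖y‖ < r₀ ∧ u y = 1 := by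
      intro y hyfr
      have hyΩc : y ∉ Ω := by
        rw [hopen.frontier_eq] at hyfr
        exact hyfr.2
      have hycl : y ∈ closure Ω := frontier_subset_closure hyfr
      have := hr₀sub hycl
      rw [mem_ball_zero_iff] at this
      exact ⟨hδΩc y hyΩc, this, hbdry y hyfr⟩
    have hlapD : ∀ (a b k : ℝ), ∀ y ∈ D,
        lap (fun z => a * bfun n z + b * u z + k) y = 0 := by
      intro a b k y hyD
      have hy0 : y ≠ 0 := hDne0 y (subset_closure hyD)
      have hyU : U ∈ 𝓝 y := hUopen.mem_nhds (hDU (subset_closure hyD))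
      have hcu : ContDiffAt ℝ 2 u y := (huU.contDiffAt hyU).of_le (WithTop.coe_le_coe.2 le_top)
      have hcb : ContDiffAt ℝ 2 (bfun n) y := (bfun_contDiffAt hy0).of_le (by simp)
      rw [lap_add_const k ((contDiffAt_const.mul hcb).add (contDiffAt_const.mul hcu)),
        lap_add (contDiffAt_const.mul hcb) (contDiffAt_const.mul hcu),
        lap_const_mul a hcb, lap_const_mul b hcu, lap_bfun hy0, hharm y hyD.2]
      ring
    have hbnonneg : ∀ y : EuclideanSpace ℝ (Fin n), 0 ≤ bfun n y := by
      intro y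
      rw [bfun_eq]
      exact Real.rpow_nonneg (norm_nonneg y) _
    have hRnonneg : (0:ℝ) ≤ R ^ ((2:ℝ) - n) := Real.rpow_nonneg hRpos.le _
    have hxclD : x ∈ closure D := by
      apply subset_closure
      exact ⟨by rw [mem_ball_zero_iff]; exact hRx, hxnotin⟩
    constructor
    · -- lower bound
      set Klow : ℝ := C₁ * R ^ ((2:ℝ) - n) + ε with hKlow
      have hKlow0 : 0 ≤ Klow := by positivity
      have hbd : ∀ y ∈ frontier D, C₁ * bfun n y + (-1) * u y + (-Klow) ≤ 0 := by
        intro y hyfr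
        rcases hfr hyfr with hsf | hfΩ
        · have hyR : ‖y‖ = R := mem_sphere_zero_iff_norm.1 hsf
          have huy := abs_lt.1 (hsphere_u y hyR)
          have hby : bfun n y = R ^ ((2:ℝ) - n) := by rw [bfun_eq, hyR]
          rw [hby, hKlow]
          linarith
        · obtain ⟨hyδ, _, hyu⟩ := hfrontΩ y hfΩ
          have hb : bfun n y ≤ δ ^ ((2:ℝ) - n) := by
            rw [bfun_eq]
            exact Real.rpow_le_rpow_of_nonpos hδpos hyδ hexp_nonpos
          have h2 : C₁ * δ ^ ((2:ℝ) - n) = 1 := by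
            rw [hC₁, ← Real.rpow_add hδpos]
            norm_num
          have hCb : C₁ * bfun n y ≤ 1 := by
            calc C₁ * bfun n y ≤ C₁ * δ ^ ((2:ℝ) - n) :=
                  mul_le_mul_of_nonneg_left hb hC₁pos.le
              _ = 1 := h2
          rw [hyu]
          linarith
      have := weak_max hnpos hDopen hDbd hs₀open hDs₀
        (((contDiffOn_const.mul hbcd).add (contDiffOn_const.mul hucd)).add contDiffOn_const)
        (hlapD C₁ (-1) (-Klow)) hbd x hxclD
      rw [bfun_eq] at this
      rw [hKlow] at this
      linarith
    · -- upper bound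
      have hbd : ∀ y ∈ frontier D, 1 * u y + (-C₂) * bfun n y + (-ε) ≤ 0 := by
        intro y hyfr
        rcases hfr hyfr with hsf | hfΩ
        · have hyR : ‖y‖ = R := mem_sphere_zero_iff_norm.1 hsf
          have huy := abs_lt.1 (hsphere_u y hyR)
          have := hbnonneg y
          nlinarith [hC₂pos]
        · obtain ⟨hyδ, hyr₀, hyu⟩ := hfrontΩ y hfΩ
          have hypos : (0:ℝ) < ‖y‖ := by linarith
          have hb : r₀ ^ ((2:ℝ) - n) ≤ bfun n y := by
            rw [bfun_eq]
            exact Real.rpow_le_rpow_of_nonpos hypos hyr₀.le hexp_nonpos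
          have h2 : C₂ * r₀ ^ ((2:ℝ) - n) = 1 := by
            rw [hC₂, ← Real.rpow_add hr₀pos]
            norm_num
          have hCb : 1 ≤ C₂ * bfun n y := by
            calc (1:ℝ) = C₂ * r₀ ^ ((2:ℝ) - n) := h2.symm
              _ ≤ C₂ * bfun n y := mul_le_mul_of_nonneg_left hb hC₂pos.le
          rw [hyu]
          linarith
      have := weak_max hnpos hDopen hDbd hs₀open hDs₀
        (((contDiffOn_const.mul hucd).add (contDiffOn_const.mul hbcd)).add contDiffOn_const)
        (fun y hy => by
          have h := hlapD (-C₂) 1 (-ε) y hy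
          rw [show (fun z => 1 * u z + (-C₂) * bfun n z + (-ε))
            = (fun z => (-C₂) * bfun n z + 1 * u z + (-ε)) from funext fun z => by ring]
          exact h)
        hbd x hxclD
      rw [bfun_eq] at this
      linarith
  constructor
  · refine le_of_forall_pos_le_add fun ε hε => ?_
    obtain ⟨h1, _⟩ := main (ε/2) (by positivity)
    linarith
  · refine le_of_forall_pos_le_add fun ε hε => (main ε hε).2
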